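/- arXiv:2003.02165 — 3 statements merged into one kernel-verified Lean document; each statement's English description precedes it below -/
import Mathlib

section
/- Let d ≥ 2, g : [-1,1] → ℝ continuous on [-1,1], differentiable on (-1,1) with g' strictly convex on (-1,1). If t_0,...,t_d ∈ (-1,1] satisfy ∑ t_i = 0, ∑ t_i² = (d+1)/d, and not all of the multiset {t_i} equals {-1, 1/d, ..., 1/d}, i.e., t_i > -1 for all i, then g(-1) + d·g(1/d) < ∑_{i=0}^d g(t_i). -/
/-!
Put `m = 1/d` and let `Q` be the quadratic with `Q m = g m`, `Q' m = g' m` and `Q (-1) = g (-1)`.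
Then `h = g - Q` vanishes at `-1` and at `m`, `h' m = 0`, and `h'` is strictly convex; Rolle
produces a second zero of `h'` in `(-1, m)`, and the sign pattern of `h'` forces `h > 0` on
`(-1, 1] \ {m}`. The configuration `(-1, m, …, m)` has the same first two moments as `t`, so
`∑ Q (t i) = Q (-1) + d Q m`, which is the left-hand side; and the `t i` are not all equal to `m`.
-/

open Set

section StrictConvex

variable {s : Set ℝ} {f : ℝ → ℝ} {p q x : ℝ}

lemma StrictConvexOn.sub_affine (hf : StrictConvexOn ℝ s f) (α β : ℝ) :
    StrictConvexOn ℝ s fun x ↦ f x - (α + β * x) :=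
  hf.sub_concaveOn ((concaveOn_const α hf.1).add ((LinearMap.mulLeft ℝ β).concaveOn hf.1))

lemma StrictConvexOn.neg_of_mem_Ioo (hf : StrictConvexOn ℝ s f) (hp : p ∈ s) (hq : q ∈ s)
    (hfp : f p = 0) (hfq : f q = 0) (hx : x ∈ Ioo p q) : f x < 0 := by
  have hpq := hx.1.trans hx.2
  have := hf.lt_on_openSegment hp hq hpq.ne (openSegment_eq_Ioo hpq ▸ hx)
  rwa [hfp, hfq, max_self] at this

lemma StrictConvexOn.pos_of_lt (hf : StrictConvexOn ℝ s f) (hp : p ∈ s) (hx : x ∈ s)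
    (hfp : f p = 0) (hfq : f q = 0) (hpq : p < q) (hqx : q < x) : 0 < f x := by
  have := hf.slope_strict_mono_adjacent hp hx hpq hqx
  simpa [hfp, hfq, sub_pos.2 hqx] using this

lemma StrictConvexOn.pos_of_gt (hf : StrictConvexOn ℝ s f) (hx : x ∈ s) (hq : q ∈ s)
    (hfp : f p = 0) (hfq : f q = 0) (hxp : x < p) (hpq : p < q) : 0 < f x := by
  have := hf.slope_strict_mono_adjacent hx hq hxp hpq
  simpa [hfp, hfq, neg_div, sub_pos.2 hxp] using this

end StrictConvex

section Derivative

variable {h h' : ℝ → ℝ} {u v : ℝ}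

lemma strictMonoOn_Icc_of_hasDerivAt_pos (hc : ContinuousOn h (Icc u v))
    (hder : ∀ x ∈ Ioo u v, HasDerivAt h (h' x) x) (hpos : ∀ x ∈ Ioo u v, 0 < h' x) :
    StrictMonoOn h (Icc u v) :=
  strictMonoOn_of_hasDerivWithinAt_pos (convex_Icc u v) hc
    (fun x hx ↦ (hder x (by rwa [interior_Icc] at hx)).hasDerivWithinAt)
    (fun x hx ↦ hpos x (by rwa [interior_Icc] at hx))

lemma strictAntiOn_Icc_of_hasDerivAt_neg (hc : ContinuousOn h (Icc u v))
    (hder : ∀ x ∈ Ioo u v, HasDerivAt h (h' x) x) (hneg : ∀ x ∈ Ioo u v, h' x < 0) :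
    StrictAntiOn h (Icc u v) :=
  strictAntiOn_of_hasDerivWithinAt_neg (convex_Icc u v) hc
    (fun x hx ↦ (hder x (by rwa [interior_Icc] at hx)).hasDerivWithinAt)
    (fun x hx ↦ hneg x (by rwa [interior_Icc] at hx))

variable {a b m : ℝ}

/-- By Rolle, `h'` has a second zero `ξ ∈ (a, m)`; convexity of `h'` then makes `h` increase on
`[a, ξ]`, decrease on `[ξ, m]` and increase on `[m, b]`. -/
theorem pos_of_strictConvexOn_deriv (ham : a < m) (hmb : m < b) (hc : ContinuousOn h (Icc a b))
    (hder : ∀ x ∈ Ioo a b, HasDerivAt h (h' x) x) (hcv : StrictConvexOn ℝ (Ioo a b) h')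
    (ha : h a = 0) (hm : h m = 0) (h'm : h' m = 0) {x : ℝ} (hx : x ∈ Ioc a b) (hxm : x ≠ m) :
    0 < h x := by
  have hmI : m ∈ Ioo a b := ⟨ham, hmb⟩
  have hderOn : ∀ {u v}, a ≤ u → v ≤ b → ∀ y ∈ Ioo u v, HasDerivAt h (h' y) y :=
    fun hu hv y hy ↦ hder y ⟨hu.trans_lt hy.1, hy.2.trans_le hv⟩
  have hcOn : ∀ {u v}, a ≤ u → v ≤ b → ContinuousOn h (Icc u v) :=
    fun hu hv ↦ hc.mono (Icc_subset_Icc hu hv)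
  obtain ⟨ξ, hξ, h'ξ⟩ : ∃ ξ ∈ Ioo a m, h' ξ = 0 :=
    exists_hasDerivAt_eq_zero ham (hcOn le_rfl hmb.le) (ha.trans hm.symm) (hderOn le_rfl hmb.le)
  have hξI : ξ ∈ Ioo a b := ⟨hξ.1, hξ.2.trans hmb⟩
  rcases lt_or_gt_of_ne hxm with hxm | hmx
  · rcases le_or_gt x ξ with hxξ | hξx
    · have hinc := strictMonoOn_Icc_of_hasDerivAt_pos (hcOn le_rfl hξI.2.le)
        (hderOn le_rfl hξI.2.le) fun y hy ↦
          hcv.pos_of_gt ⟨hy.1, hy.2.trans hξI.2⟩ hmI h'ξ h'm hy.2 hξ.2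
      simpa [ha] using hinc ⟨le_rfl, hξ.1.le⟩ ⟨hx.1.le, hxξ⟩ hx.1
    · have hdec := strictAntiOn_Icc_of_hasDerivAt_neg (hcOn hξI.1.le hmb.le)
        (hderOn hξI.1.le hmb.le) fun y hy ↦ hcv.neg_of_mem_Ioo hξI hmI h'ξ h'm hy
      simpa [hm] using hdec ⟨hξx.le, hxm.le⟩ ⟨hξ.2.le, le_rfl⟩ hxm
  · have hinc := strictMonoOn_Icc_of_hasDerivAt_pos (hcOn ham.le le_rfl)
      (hderOn ham.le le_rfl) fun y hy ↦
        hcv.pos_of_lt hξI ⟨hmI.1.trans hy.1, hy.2⟩ h'ξ h'm hξ.2 hy.1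
    simpa [hm] using hinc ⟨le_rfl, hmb.le⟩ ⟨hmx.le, hx.2⟩ hmx

end Derivative

lemma hasDerivAt_quadratic (α β γ m x : ℝ) :
    HasDerivAt (fun y ↦ α + β * (y - m) + γ * (y - m) ^ 2) (β + 2 * γ * (x - m)) x := by
  have hlin := (hasDerivAt_id' x).sub_const m
  exact (((hlin.const_mul β).const_add α).fun_add ((hlin.fun_pow 2).const_mul γ)).congr_deriv
    (by norm_num; ring)

theorem exists_quadratic_lt_of_strictConvexOn_deriv {g g' : ℝ → ℝ} {a b m : ℝ}
    (ham : a < m) (hmb : m < b) (hc : ContinuousOn g (Icc a b))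
    (hder : ∀ x ∈ Ioo a b, HasDerivAt g (g' x) x) (hcv : StrictConvexOn ℝ (Ioo a b) g') :
    ∃ c, g a = g m + g' m * (a - m) + c * (a - m) ^ 2 ∧
      ∀ x ∈ Ioc a b, x ≠ m → g m + g' m * (x - m) + c * (x - m) ^ 2 < g x := by
  set c := (g a - g m - g' m * (a - m)) / (a - m) ^ 2
  have hc_interp : g a = g m + g' m * (a - m) + c * (a - m) ^ 2 := by
    rw [div_mul_cancel₀ _ (pow_ne_zero 2 (sub_ne_zero.2 ham.ne))]
    ring
  refine ⟨c, hc_interp, fun x hx hxm ↦ sub_pos.1 ?_⟩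
  have hder_sub : ∀ y ∈ Ioo a b,
      HasDerivAt (fun y ↦ g y - (g m + g' m * (y - m) + c * (y - m) ^ 2))
        (g' y - (g' m - 2 * c * m + 2 * c * y)) y := fun y hy ↦
    ((hder y hy).sub (hasDerivAt_quadratic _ _ _ m y)).congr_deriv (by ring)
  exact pos_of_strictConvexOn_deriv ham hmb (hc.sub (by fun_prop)) hder_sub
    (hcv.sub_affine _ _) (sub_eq_zero.2 hc_interp) (by simp) (by ring) hx hxm

/-- `(-1, 1/d, …, 1/d)` has the same first two moments as `t`, hence every quadratic has the
same sum over both. -/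
lemma sum_quadratic_eq_of_moments {d : ℕ} (hd : (d : ℝ) ≠ 0) {t : Fin (d + 1) → ℝ}
    (hsum : ∑ i, t i = 0) (hsq : ∑ i, t i ^ 2 = ((d : ℝ) + 1) / d) (α β γ : ℝ) :
    ∑ i, (α + β * (t i - 1 / d) + γ * (t i - 1 / d) ^ 2) =
      α + β * (-1 - 1 / d) + γ * (-1 - 1 / d) ^ 2 + d * α := by
  have hexpand : ∀ i, α + β * (t i - 1 / d) + γ * (t i - 1 / d) ^ 2 =
      (α - β / d + γ / d ^ 2) + (β - 2 * γ / d) * t i + γ * t i ^ 2 := fun i ↦ by ring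
  simp only [hexpand, Finset.sum_add_distrib, ← Finset.mul_sum, hsum, hsq, Finset.sum_const,
    Finset.card_univ, Fintype.card_fin, nsmul_eq_mul]
  field_simp
  push_cast
  ring

theorem stmt_3 (d : ℕ) (hd : 2 ≤ d) (g : ℝ → ℝ) (g' : ℝ → ℝ)
    (hcont : ContinuousOn g (Set.Icc (-1:ℝ) 1))
    (hderiv : ∀ t ∈ Set.Ioo (-1:ℝ) 1, HasDerivAt g (g' t) t)
    (hconv : StrictConvexOn ℝ (Set.Ioo (-1:ℝ) 1) g')
    (t : Fin (d+1) → ℝ) (ht : ∀ i, t i ∈ Set.Ioc (-1:ℝ) 1)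
    (hsum : ∑ i, t i = 0) (hsq : ∑ i, (t i)^2 = ((d:ℝ)+1)/(d:ℝ)) :
    g (-1) + (d:ℝ) * g (1/(d:ℝ)) < ∑ i, g (t i) := by
  have hd1 : (1 : ℝ) < d := by exact_mod_cast hd
  have hd0 : (d : ℝ) ≠ 0 := by positivity
  obtain ⟨c, hc_left, hlt⟩ := exists_quadratic_lt_of_strictConvexOn_deriv (m := 1 / d)
    (neg_one_lt_zero.trans (by positivity)) ((div_lt_one (by positivity)).2 hd1)
    hcont hderiv hconv
  obtain ⟨j, hj⟩ : ∃ j, t j ≠ 1 / d := by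
    by_contra! hall
    simp only [hall, Finset.sum_const, Finset.card_univ, Fintype.card_fin, nsmul_eq_mul] at hsum
    field_simp at hsum
    push_cast at hsum
    linarith
  calc g (-1) + d * g (1 / d)
      = ∑ i, (g (1 / d) + g' (1 / d) * (t i - 1 / d) + c * (t i - 1 / d) ^ 2) := by
        rw [sum_quadratic_eq_of_moments hd0 hsum hsq, hc_left]
    _ < ∑ i, g (t i) := by
        refine Finset.sum_lt_sum (fun i _ ↦ ?_) ⟨j, Finset.mem_univ j, hlt _ (ht j) hj⟩
        rcases eq_or_ne (t i) (1 / d) with hi | hi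
        · simp [hi]
        · exact (hlt _ (ht i) hi).le
end

section
/- Let d ≥ 2 and f : [0,4] → [-∞,∞) be continuous on (0,4], differentiable on (0,4) with f' convex on (0,4), and lim_{t→0⁺} f(t) = f(0). Let ω* be the vertex set of a regular d-simplex inscribed in S^{d-1}. Then max_{x ∈ S^{d-1}} ∑_{v ∈ ω*} f(|x - v|²) = f(4) + d·f(2 - 2/d), attained at every point of -ω*; and if f(0) > -∞, then min_{x ∈ S^{d-1}} ∑_{v ∈ ω*} f(|x - v|²) = f(0) + d·f(2 + 2/d), attained at every point of ω*. -/
/-!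
For a unit vector `y` write `tᵢ = ‖y - vᵢ‖² = 2 - 2⟪y, vᵢ⟫`. The vertices of the regular simplex
form a spherical 2-design: `∑ ⟪y, vᵢ⟫ = 0` and `∑ ⟪y, vᵢ⟫² = (d + 1) / d`, so the potential of
every quadratic polynomial is constant on the sphere.

Let `q` be the quadratic agreeing with `f` to first order at `s = 2 - 2/d` and agreeing with `f`
at `4`. As `f'` is convex, `(f - q)'` is convex with a zero at `s`, and Rolle gives a second one in
`(s, 4)`; the resulting sign pattern of `(f - q)'` forces `f ≤ q` on `[0, 4]`. Hence the potential
of `f` at `y` is at most that of `q`, which is the same at `-vₖ`, where all the distances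
`4, s, …, s` are nodes of the interpolation. The minimum is symmetric, interpolating at `0` and to
first order at `2 + 2/d`.
-/

open Set Filter Topology Module
open scoped RealInnerProductSpace

section ConvexDerivative

variable {G φ : ℝ → ℝ} {a m b : ℝ}

theorem le_of_hasDerivAt_of_nonneg {u v : ℝ} (huv : u ≤ v) (hc : ContinuousOn G (Icc u v))
    (hd : ∀ t ∈ Ioo u v, HasDerivAt G (φ t) t) (hφ : ∀ t ∈ Ioo u v, 0 ≤ φ t) : G u ≤ G v := by
  rw [← interior_Icc] at hd hφ
  exact monotoneOn_of_hasDerivWithinAt_nonneg (convex_Icc u v) hc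
    (fun t ht => (hd t ht).hasDerivWithinAt) hφ (left_mem_Icc.2 huv) (right_mem_Icc.2 huv) huv

/-- Rolle gives a second zero `ξ ∈ (m, b)` of the convex function `φ = G'`; hence `φ ≥ 0` off
`[m, ξ]` and `φ ≤ 0` on it, so `G` increases to `G m = 0`, decreases, then increases to
`G b = 0`. -/
theorem nonpos_of_convexOn_deriv (ham : a < m) (hmb : m < b) (hc : ContinuousOn G (Icc a b))
    (hd : ∀ t ∈ Ioo a b, HasDerivAt G (φ t) t) (hφ : ConvexOn ℝ (Ioo a b) φ)
    (hGm : G m = 0) (hφm : φ m = 0) (hGb : G b = 0) : ∀ t ∈ Icc a b, G t ≤ 0 := by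
  obtain ⟨ξ, ⟨hmξ, hξb⟩, hφξ⟩ : ∃ ξ ∈ Ioo m b, φ ξ = 0 :=
    exists_hasDerivAt_eq_zero hmb (hc.mono (Icc_subset_Icc ham.le le_rfl)) (hGm.trans hGb.symm)
      fun t ht => hd t ⟨ham.trans ht.1, ht.2⟩
  have hm : m ∈ Ioo a b := ⟨ham, hmb⟩
  have hξ : ξ ∈ Ioo a b := ⟨ham.trans hmξ, hξb⟩
  have hφ_left : ∀ w ∈ Ioo a b, w ≤ m → 0 ≤ φ w := fun w hw hwm => by
    simpa [hφm] using hφ.le_left_of_right_le'' hw hξ hwm hmξ (by rw [hφm, hφξ])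
  have hφ_mid : ∀ w, m ≤ w → w ≤ ξ → φ w ≤ 0 := fun w hmw hwξ => by
    simpa [hφm, hφξ] using hφ.le_on_segment hm hξ (by rw [segment_eq_Icc hmξ.le]; exact ⟨hmw, hwξ⟩)
  have hφ_right : ∀ w ∈ Ioo a b, ξ ≤ w → 0 ≤ φ w := fun w hw hξw => by
    simpa [hφξ] using hφ.le_right_of_left_le'' hm hw hmξ hξw (by rw [hφm, hφξ])
  have hG_mono : ∀ u v, a ≤ u → u ≤ v → v ≤ b → (∀ w ∈ Ioo u v, 0 ≤ φ w) → G u ≤ G v :=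
    fun u v hau huv hvb h => le_of_hasDerivAt_of_nonneg huv (hc.mono (Icc_subset_Icc hau hvb))
      (fun w hw => hd w (Ioo_subset_Ioo hau hvb hw)) h
  have hG_anti : ∀ u v, a ≤ u → u ≤ v → v ≤ b → (∀ w ∈ Ioo u v, φ w ≤ 0) → G v ≤ G u :=
    fun u v hau huv hvb h => neg_le_neg_iff.1 <| le_of_hasDerivAt_of_nonneg (G := -G) (φ := -φ) huv
      (hc.mono (Icc_subset_Icc hau hvb)).neg (fun w hw => (hd w (Ioo_subset_Ioo hau hvb hw)).neg)
      fun w hw => neg_nonneg.2 (h w hw)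
  rintro t ⟨hat, htb⟩
  rcases le_total t m with htm | hmt
  · exact hGm ▸ hG_mono t m hat htm hmb.le fun w hw =>
      hφ_left w ⟨hat.trans_lt hw.1, hw.2.trans hmb⟩ hw.2.le
  rcases le_total t ξ with htξ | hξt
  · exact hGm ▸ hG_anti m t ham.le hmt (htξ.trans hξb.le) fun w hw =>
      hφ_mid w hw.1.le (hw.2.le.trans htξ)
  · exact hGb ▸ hG_mono t b (ham.le.trans hmt) htb le_rfl fun w hw =>
      hφ_right w ⟨ham.trans_le (hmt.trans hw.1.le), hw.2⟩ (hξt.trans hw.1.le)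

/-- The mirror image of `nonpos_of_convexOn_deriv`, applied to `t ↦ -G (-t)`, whose derivative
`t ↦ φ (-t)` is again convex. -/
theorem nonneg_of_convexOn_deriv (ham : a < m) (hmb : m < b) (hc : ContinuousOn G (Icc a b))
    (hd : ∀ t ∈ Ioo a b, HasDerivAt G (φ t) t) (hφ : ConvexOn ℝ (Ioo a b) φ)
    (hGa : G a = 0) (hGm : G m = 0) (hφm : φ m = 0) : ∀ t ∈ Icc a b, 0 ≤ G t := by
  have hneg := nonpos_of_convexOn_deriv (G := fun t => -G (-t)) (φ := fun t => φ (-t))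
    (neg_lt_neg hmb) (neg_lt_neg ham) ?_ ?_ ?_ (by simp [hGm]) (by simpa) (by simp [hGa])
  · intro t ht
    simpa using hneg (-t) ⟨neg_le_neg ht.2, neg_le_neg ht.1⟩
  · exact (hc.comp continuousOn_neg fun t ht => ⟨le_neg.1 ht.2, neg_le.1 ht.1⟩).neg
  · intro t ht
    exact (((hd (-t) ⟨lt_neg.1 ht.2, neg_lt.1 ht.1⟩).comp t (hasDerivAt_neg t)).neg).congr_deriv
      (by ring)
  · have h := hφ.comp_affineMap (-AffineMap.id ℝ ℝ)
    have e : ⇑(-AffineMap.id ℝ ℝ) ⁻¹' Ioo a b = Ioo (-b) (-a) := by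
      ext t; simp [lt_neg, neg_lt, and_comm]
    rw [e] at h
    exact h

def quadratic (α β γ t : ℝ) : ℝ := α + β * t + γ * t ^ 2

theorem continuous_quadratic (α β γ : ℝ) : Continuous (quadratic α β γ) := by
  unfold quadratic
  fun_prop

theorem hasDerivAt_quadratic_s13 (α β γ t : ℝ) :
    HasDerivAt (quadratic α β γ) (β + 2 * γ * t) t :=
  ((((hasDerivAt_id t).const_mul β).const_add α).add
    ((hasDerivAt_pow 2 t).const_mul γ)).congr_deriv (by norm_num; ring)

theorem exists_quadratic_hermite (hmb : m ≠ b) (y₀ y₀' y₁ : ℝ) :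
    ∃ α β γ : ℝ, quadratic α β γ m = y₀ ∧ β + 2 * γ * m = y₀' ∧ quadratic α β γ b = y₁ := by
  set γ := (y₁ - y₀ - y₀' * (b - m)) / (b - m) ^ 2
  refine ⟨y₀ - y₀' * m + γ * m ^ 2, y₀' - 2 * γ * m, γ, by unfold quadratic; ring, by ring, ?_⟩
  have : b - m ≠ 0 := sub_ne_zero.2 hmb.symm
  unfold quadratic γ
  field_simp
  ring

theorem ConvexOn.sub_affine {s : Set ℝ} (hφ : ConvexOn ℝ s φ) (β c : ℝ) :
    ConvexOn ℝ s fun t => φ t - (β + c * t) := by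
  have h := (hφ.add ((LinearMap.mulLeft ℝ (-c)).convexOn hφ.1)).add_const (-β)
  have e : (φ + ⇑(LinearMap.mulLeft ℝ (-c)) + fun _ => -β) = fun t => φ t - (β + c * t) := by
    ext t
    simp only [Pi.add_apply, LinearMap.mulLeft_apply]
    ring
  rwa [e] at h

theorem le_quadratic_of_convexOn_deriv {F F' : ℝ → ℝ} {α β γ : ℝ} (ham : a < m) (hmb : m < b)
    (hc : ContinuousOn F (Icc a b)) (hd : ∀ t ∈ Ioo a b, HasDerivAt F (F' t) t)
    (hconv : ConvexOn ℝ (Ioo a b) F') (hm : F m = quadratic α β γ m)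
    (hm' : F' m = β + 2 * γ * m) (hb : F b = quadratic α β γ b) :
    ∀ t ∈ Icc a b, F t ≤ quadratic α β γ t := fun t ht =>
  sub_nonpos.1 <| nonpos_of_convexOn_deriv (G := fun t => F t - quadratic α β γ t) ham hmb
    (hc.sub (continuous_quadratic α β γ).continuousOn)
    (fun t ht => (hd t ht).sub (hasDerivAt_quadratic_s13 α β γ t))
    (hconv.sub_affine β (2 * γ)) (by rw [hm, sub_self]) (by rw [hm', sub_self])
    (by rw [hb, sub_self]) t ht

theorem quadratic_le_of_convexOn_deriv {F F' : ℝ → ℝ} {α β γ : ℝ} (ham : a < m) (hmb : m < b)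
    (hc : ContinuousOn F (Icc a b)) (hd : ∀ t ∈ Ioo a b, HasDerivAt F (F' t) t)
    (hconv : ConvexOn ℝ (Ioo a b) F') (ha : F a = quadratic α β γ a)
    (hm : F m = quadratic α β γ m) (hm' : F' m = β + 2 * γ * m) :
    ∀ t ∈ Icc a b, quadratic α β γ t ≤ F t := fun t ht =>
  sub_nonneg.1 <| nonneg_of_convexOn_deriv (G := fun t => F t - quadratic α β γ t) ham hmb
    (hc.sub (continuous_quadratic α β γ).continuousOn)
    (fun t ht => (hd t ht).sub (hasDerivAt_quadratic_s13 α β γ t))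
    (hconv.sub_affine β (2 * γ)) (by rw [ha, sub_self]) (by rw [hm, sub_self])
    (by rw [hm', sub_self]) t ht

end ConvexDerivative

theorem ContinuousOn.Icc_of_Ioc {X : Type*} [TopologicalSpace X] {f : ℝ → X} {a b : ℝ}
    (hab : a < b) (hf : ContinuousOn f (Ioc a b)) (ha : ContinuousWithinAt f (Ioi a) a) :
    ContinuousOn f (Icc a b) := by
  intro t ht
  rcases ht.1.eq_or_lt with rfl | hat
  · exact (continuousWithinAt_Icc_iff_Ici hab).2 (continuousWithinAt_Ioi_iff_Ici.1 ha)
  · exact (hf t ⟨hat, ht.2⟩).mono_of_mem_nhdsWithin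
      (mem_nhdsWithin.2 ⟨Ioi a, isOpen_Ioi, hat, fun u hu => ⟨hu.1, hu.2.2⟩⟩)

section EReal

variable {f : ℝ → EReal} {f' : ℝ → ℝ} {a s b : ℝ}

theorem exists_quadratic_ge_of_convexOn_deriv (has : a < s) (hsb : s < b)
    (htop : ∀ t ∈ Ioc a b, f t ≠ ⊤) (hbot : ∀ t ∈ Ioc a b, f t ≠ ⊥) (hc : ContinuousOn f (Ioc a b))
    (hd : ∀ t ∈ Ioo a b, HasDerivAt (fun u => (f u).toReal) (f' t) t)
    (hconv : ConvexOn ℝ (Ioo a b) f') (hlim : Tendsto f (𝓝[>] a) (𝓝 (f a))) :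
    ∃ α β γ : ℝ, (∀ t ∈ Icc a b, f t ≤ quadratic α β γ t) ∧
      f s = quadratic α β γ s ∧ f b = quadratic α β γ b := by
  set F : ℝ → ℝ := fun u => (f u).toReal
  have hfF : ∀ t ∈ Ioc a b, f t = F t := fun t ht =>
    (EReal.coe_toReal (htop t ht) (hbot t ht)).symm
  have hF : ContinuousOn F (Ioc a b) :=
    EReal.continuousOn_toReal.comp hc fun t ht => by simp [htop t ht, hbot t ht]
  obtain ⟨α, β, γ, hs, hs', hb⟩ := exists_quadratic_hermite hsb.ne (F s) (f' s) (F b)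
  have hle : ∀ t ∈ Ioc a b, F t ≤ quadratic α β γ t := by
    rintro t ⟨hat, htb⟩
    -- `F` is only continuous on `(a, b]`: compare on `[a', b]` with `a < a' ≤ t`, `a' < s`.
    have haa' : a < min t ((a + s) / 2) := lt_min hat (by linarith)
    have ha's : min t ((a + s) / 2) < s := (min_le_right _ _).trans_lt (by linarith)
    exact le_quadratic_of_convexOn_deriv ha's hsb (hF.mono (Icc_subset_Ioc haa' le_rfl))
      (fun u hu => hd u (Ioo_subset_Ioo haa'.le le_rfl hu))
      (hconv.subset (Ioo_subset_Ioo haa'.le le_rfl) (convex_Ioo _ _)) hs.symm hs'.symm hb.symm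
      t ⟨min_le_left _ _, htb⟩
  refine ⟨α, β, γ, fun t ⟨hat, htb⟩ => ?_, by rw [hfF s ⟨has, hsb.le⟩, hs],
    by rw [hfF b ⟨has.trans hsb, le_rfl⟩, hb]⟩
  rcases hat.eq_or_lt with rfl | hat
  · refine le_of_tendsto_of_tendsto hlim
      (continuous_coe_real_ereal.comp (continuous_quadratic α β γ)).continuousWithinAt ?_
    filter_upwards [Ioo_mem_nhdsGT (has.trans hsb)] with u hu
    rw [hfF u (Ioo_subset_Ioc_self hu)]
    exact EReal.coe_le_coe_iff.2 (hle u (Ioo_subset_Ioc_self hu))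
  · rw [hfF t ⟨hat, htb⟩]
    exact EReal.coe_le_coe_iff.2 (hle t ⟨hat, htb⟩)

theorem exists_quadratic_le_of_convexOn_deriv (has : a < s) (hsb : s < b)
    (htop : ∀ t ∈ Icc a b, f t ≠ ⊤) (hbot : ∀ t ∈ Icc a b, f t ≠ ⊥) (hc : ContinuousOn f (Ioc a b))
    (hd : ∀ t ∈ Ioo a b, HasDerivAt (fun u => (f u).toReal) (f' t) t)
    (hconv : ConvexOn ℝ (Ioo a b) f') (hlim : Tendsto f (𝓝[>] a) (𝓝 (f a))) :
    ∃ α β γ : ℝ, (∀ t ∈ Icc a b, quadratic α β γ t ≤ f t) ∧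
      f a = quadratic α β γ a ∧ f s = quadratic α β γ s := by
  set F : ℝ → ℝ := fun u => (f u).toReal
  have hfF : ∀ t ∈ Icc a b, f t = F t := fun t ht =>
    (EReal.coe_toReal (htop t ht) (hbot t ht)).symm
  have hF : ContinuousOn F (Icc a b) :=
    EReal.continuousOn_toReal.comp (hc.Icc_of_Ioc (has.trans hsb) hlim)
      fun t ht => by simp [htop t ht, hbot t ht]
  obtain ⟨α, β, γ, hs, hs', ha⟩ := exists_quadratic_hermite has.ne' (F s) (f' s) (F a)
  refine ⟨α, β, γ, fun t ht => ?_, by rw [hfF a (left_mem_Icc.2 (has.trans hsb).le), ha],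
    by rw [hfF s ⟨has.le, hsb.le⟩, hs]⟩
  rw [hfF t ht]
  exact EReal.coe_le_coe_iff.2
    (quadratic_le_of_convexOn_deriv has hsb hF hd hconv ha.symm hs.symm hs'.symm t ht)

end EReal

section RegularSimplex

variable {E : Type*} [NormedAddCommGroup E]

def potential {ι M : Type*} [Fintype ι] [AddCommMonoid M] (x : ι → E) (g : ℝ → M) (y : E) : M :=
  ∑ i, g (‖y - x i‖ ^ 2)

theorem potential_coe {ι : Type*} [Fintype ι] (x : ι → E) (g : ℝ → ℝ) (y : E) :
    potential x (fun t => (g t : EReal)) y = potential x g y :=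
  (map_sum (⟨⟨(↑), EReal.coe_zero⟩, EReal.coe_add⟩ : ℝ →+ EReal) _ _).symm

variable [InnerProductSpace ℝ E] {d : ℕ}

def IsRegularSimplex (x : Fin (d + 1) → E) : Prop :=
  (∀ i, ‖x i‖ = 1) ∧ ∀ i j, i ≠ j → ⟪x i, x j⟫ = -1 / d

namespace IsRegularSimplex

variable {x : Fin (d + 1) → E}

theorem inner_sum_smul (hx : IsRegularSimplex x) (c : Fin (d + 1) → ℝ) (i : Fin (d + 1)) :
    ⟪∑ j, c j • x j, x i⟫ = (1 + 1 / d) * c i - (∑ j, c j) / d := by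
  rw [sum_inner, Fin.sum_univ_succAbove _ i, Fin.sum_univ_succAbove c i]
  simp only [real_inner_smul_left, real_inner_self_eq_norm_sq, hx.1,
    hx.2 _ _ (Fin.succAbove_ne i _), ← Finset.sum_mul]
  ring

theorem sum_eq_zero (hx : IsRegularSimplex x) (hd : d ≠ 0) : ∑ i, x i = 0 := by
  have h : ∀ i, ⟪∑ j, x j, x i⟫ = 0 := fun i => by
    simpa [field, hd] using hx.inner_sum_smul 1 i
  rw [← inner_self_eq_zero (𝕜 := ℝ), inner_sum]
  exact Finset.sum_eq_zero fun i _ => h i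

theorem linearIndependent_succ (hx : IsRegularSimplex x) (hd : d ≠ 0) :
    LinearIndependent ℝ fun i : Fin d => x i.succ := by
  rw [Fintype.linearIndependent_iff]
  intro g hg
  set c : Fin (d + 1) → ℝ := Fin.cons 0 g
  have hc : ∑ j, c j • x j = 0 := by simp [c, Fin.sum_univ_succ, hg]
  have key : ∀ i, (d + 1) * c i = ∑ j, c j := fun i => by
    have := hx.inner_sum_smul c i
    rw [hc, inner_zero_left] at this
    field_simp at this
    linarith
  have hsum : ∑ j, c j = 0 := by simpa [c] using (key 0).symm
  intro i
  simpa [c, hsum, Nat.cast_add_one_ne_zero] using key i.succ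

/-- Pairing `∑ ⟪y, xⱼ⟫ xⱼ` with a vertex `xᵢ` gives `(1 + 1/d) ⟪y, xᵢ⟫` (the Gram matrix is
`(1 + 1/d) I - J/d` and `∑ ⟪y, xⱼ⟫ = 0`); as `d` of the vertices form a basis,
`∑ ⟪y, xⱼ⟫ xⱼ = (1 + 1/d) y`. -/
theorem sum_inner_sq (hx : IsRegularSimplex x) (hd : d ≠ 0) (hE : finrank ℝ E = d) (y : E) :
    ∑ i, ⟪y, x i⟫ ^ 2 = (1 + 1 / d) * ‖y‖ ^ 2 := by
  have : Nonempty (Fin d) := ⟨⟨0, Nat.pos_of_ne_zero hd⟩⟩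
  let b := basisOfLinearIndependentOfCardEqFinrank (hx.linearIndependent_succ hd) (by simp [hE])
  have hframe : ∑ j, ⟪y, x j⟫ • x j = (1 + 1 / d : ℝ) • y := by
    refine InnerProductSpace.ext_inner_right_basis b fun i => ?_
    rw [coe_basisOfLinearIndependentOfCardEqFinrank, hx.inner_sum_smul, ← inner_sum,
      hx.sum_eq_zero hd, inner_zero_right, real_inner_smul_left]
    ring
  have := congrArg (fun v => ⟪y, v⟫) hframe
  simp only [inner_sum, real_inner_smul_right, real_inner_self_eq_norm_sq] at this
  rw [← this]
  exact Finset.sum_congr rfl fun i _ => sq _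

theorem norm_sub_sq (hx : IsRegularSimplex x) {y : E} (hy : ‖y‖ = 1) (i : Fin (d + 1)) :
    ‖y - x i‖ ^ 2 = 2 - 2 * ⟪y, x i⟫ := by
  rw [norm_sub_sq_real, hy, hx.1]
  ring

theorem norm_sub_sq_mem_Icc (hx : IsRegularSimplex x) {y : E} (hy : ‖y‖ = 1) (i : Fin (d + 1)) :
    ‖y - x i‖ ^ 2 ∈ Icc (0 : ℝ) 4 := by
  have := abs_real_inner_le_norm y (x i)
  rw [hy, hx.1, one_mul] at this
  rw [hx.norm_sub_sq hy]
  constructor <;> linarith [neg_abs_le ⟪y, x i⟫, le_abs_self ⟪y, x i⟫]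

theorem potential_quadratic (hx : IsRegularSimplex x) (hd : d ≠ 0) (hE : finrank ℝ E = d)
    {y : E} (hy : ‖y‖ = 1) (α β γ : ℝ) :
    potential x (quadratic α β γ) y
      = (d + 1) * (α + 2 * β + 4 * γ) + 4 * γ * (1 + 1 / d) := by
  have hsum : ∑ i, ⟪y, x i⟫ = 0 := by rw [← inner_sum, hx.sum_eq_zero hd, inner_zero_right]
  have hsq := hx.sum_inner_sq hd hE y
  rw [hy] at hsq
  calc potential x (quadratic α β γ) y
      = ∑ i, ((α + 2 * β + 4 * γ) - (2 * β + 8 * γ) * ⟪y, x i⟫ + 4 * γ * ⟪y, x i⟫ ^ 2) := by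
        refine Finset.sum_congr rfl fun i _ => ?_
        rw [quadratic, hx.norm_sub_sq hy]
        ring
    _ = (d + 1) * (α + 2 * β + 4 * γ) + 4 * γ * (1 + 1 / d) := by
        rw [Finset.sum_add_distrib, Finset.sum_sub_distrib, ← Finset.mul_sum, ← Finset.mul_sum,
          hsum, hsq]
        simp
        ring

theorem potential_vertex (hx : IsRegularSimplex x) {M : Type*} [AddCommMonoid M] (g : ℝ → M)
    (k : Fin (d + 1)) : potential x g (x k) = g 0 + d • g (2 + 2 / d) := by
  rw [potential, Fin.sum_univ_succAbove _ k, sub_self, norm_zero, zero_pow two_ne_zero]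
  congr 1
  have h : ∀ i, ‖x k - x (k.succAbove i)‖ ^ 2 = 2 + 2 / d := fun i => by
    rw [hx.norm_sub_sq (hx.1 k), hx.2 _ _ (Fin.succAbove_ne k i).symm]
    ring
  simp [h]

theorem potential_neg_vertex (hx : IsRegularSimplex x) {M : Type*} [AddCommMonoid M] (g : ℝ → M)
    (k : Fin (d + 1)) : potential x g (-x k) = g 4 + d • g (2 - 2 / d) := by
  have hk : ‖-x k‖ = 1 := by rw [norm_neg, hx.1]
  rw [potential, Fin.sum_univ_succAbove _ k, hx.norm_sub_sq hk, inner_neg_left,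
    real_inner_self_eq_norm_sq, hx.1]
  have h : ∀ i, ‖-x k - x (k.succAbove i)‖ ^ 2 = 2 - 2 / d := fun i => by
    rw [hx.norm_sub_sq hk, inner_neg_left, hx.2 _ _ (Fin.succAbove_ne k i).symm]
    ring
  simp only [h]
  norm_num

theorem potential_le_of_le_quadratic (hx : IsRegularSimplex x) (hd : d ≠ 0)
    (hE : finrank ℝ E = d) {f : ℝ → EReal} {α β γ : ℝ}
    (hle : ∀ t ∈ Icc (0 : ℝ) 4, f t ≤ quadratic α β γ t)
    (h4 : f 4 = quadratic α β γ 4)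
    (hs : f (2 - 2 / d) = quadratic α β γ (2 - 2 / d))
    {y : E} (hy : ‖y‖ = 1) (k : Fin (d + 1)) : potential x f y ≤ potential x f (-x k) := by
  have hk : ‖-x k‖ = 1 := by rw [norm_neg, hx.1]
  calc potential x f y
      ≤ potential x (fun t => (quadratic α β γ t : EReal)) y :=
        Finset.sum_le_sum fun i _ => hle _ (hx.norm_sub_sq_mem_Icc hy i)
    _ = potential x (fun t => (quadratic α β γ t : EReal)) (-x k) := by
        rw [potential_coe, potential_coe, hx.potential_quadratic hd hE hy,
          hx.potential_quadratic hd hE hk]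
    _ = potential x f (-x k) := by
        rw [hx.potential_neg_vertex, hx.potential_neg_vertex, h4, hs]

theorem potential_vertex_le_of_quadratic_le (hx : IsRegularSimplex x) (hd : d ≠ 0)
    (hE : finrank ℝ E = d) {f : ℝ → EReal} {α β γ : ℝ}
    (hle : ∀ t ∈ Icc (0 : ℝ) 4, quadratic α β γ t ≤ f t)
    (h0 : f 0 = quadratic α β γ 0)
    (hs : f (2 + 2 / d) = quadratic α β γ (2 + 2 / d))
    {y : E} (hy : ‖y‖ = 1) (k : Fin (d + 1)) : potential x f (x k) ≤ potential x f y := by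
  calc potential x f (x k)
      = potential x (fun t => (quadratic α β γ t : EReal)) (x k) := by
        rw [hx.potential_vertex, hx.potential_vertex, h0, hs]
    _ = potential x (fun t => (quadratic α β γ t : EReal)) y := by
        rw [potential_coe, potential_coe, hx.potential_quadratic hd hE hy,
          hx.potential_quadratic hd hE (hx.1 k)]
    _ ≤ potential x f y := Finset.sum_le_sum fun i _ => hle _ (hx.norm_sub_sq_mem_Icc hy i)

end IsRegularSimplex

end RegularSimplex

theorem stmt_13 (d : ℕ) (hd : 2 ≤ d) (f : ℝ → EReal) (f' : ℝ → ℝ)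
    (hne_top : ∀ t ∈ Set.Icc (0:ℝ) 4, f t ≠ ⊤)
    (hfin : ∀ t ∈ Set.Ioc (0:ℝ) 4, f t ≠ ⊥)
    (hcont : ContinuousOn f (Set.Ioc (0:ℝ) 4))
    (hderiv : ∀ t ∈ Set.Ioo (0:ℝ) 4, HasDerivAt (fun s => (f s).toReal) (f' t) t)
    (hconv : ConvexOn ℝ (Set.Ioo (0:ℝ) 4) f')
    (hlim : Filter.Tendsto f (nhdsWithin 0 (Set.Ioi 0)) (nhds (f 0)))
    (x : Fin (d+1) → EuclideanSpace ℝ (Fin d))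
    (hnorm : ∀ i, ‖x i‖ = 1)
    (hinner : ∀ i j, i ≠ j → (inner ℝ (x i) (x j) : ℝ) = -1/(d:ℝ)) :
    ((∀ y : EuclideanSpace ℝ (Fin d), ‖y‖ = 1 →
        ∑ i, f (‖y - x i‖^2) ≤ f 4 + ((d:ℝ) : EReal) * f (2 - 2/(d:ℝ))) ∧
      (∀ k, ∑ i, f (‖(-(x k)) - x i‖^2) = f 4 + ((d:ℝ) : EReal) * f (2 - 2/(d:ℝ)))) ∧
    (f 0 ≠ ⊥ →
      (∀ y : EuclideanSpace ℝ (Fin d), ‖y‖ = 1 →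
        f 0 + ((d:ℝ) : EReal) * f (2 + 2/(d:ℝ)) ≤ ∑ i, f (‖y - x i‖^2)) ∧
      (∀ k, ∑ i, f (‖x k - x i‖^2) = f 0 + ((d:ℝ) : EReal) * f (2 + 2/(d:ℝ)))) := by
  have hx : IsRegularSimplex x := ⟨hnorm, hinner⟩
  have hd0 : d ≠ 0 := by omega
  have hE : finrank ℝ (EuclideanSpace ℝ (Fin d)) = d := finrank_euclideanSpace_fin
  have h2d : 2 / (d : ℝ) ≤ 1 := by
    rw [div_le_one (by positivity)]
    exact_mod_cast hd
  have h2d' : 0 < 2 / (d : ℝ) := by positivity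
  simp only [EReal.coe_coe_eq_natCast, ← EReal.nsmul_eq_mul]
  refine ⟨⟨fun y hy => ?_, hx.potential_neg_vertex f⟩,
    fun hbot0 => ⟨fun y hy => ?_, hx.potential_vertex f⟩⟩
  · obtain ⟨α, β, γ, hle, hs, h4⟩ := exists_quadratic_ge_of_convexOn_deriv (s := 2 - 2 / d)
      (by linarith) (by linarith) (fun t ht => hne_top t (Ioc_subset_Icc_self ht)) hfin hcont
      hderiv hconv hlim
    rw [← hx.potential_neg_vertex f 0]
    exact hx.potential_le_of_le_quadratic hd0 hE hle h4 hs hy 0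
  · have hbot : ∀ t ∈ Icc (0 : ℝ) 4, f t ≠ ⊥ := fun t ht =>
      ht.1.eq_or_lt.elim (fun h => h ▸ hbot0) fun h => hfin t ⟨h, ht.2⟩
    obtain ⟨α, β, γ, hle, hf0, hs⟩ := exists_quadratic_le_of_convexOn_deriv (s := 2 + 2 / d)
      (by linarith) (by linarith) hne_top hbot hcont hderiv hconv hlim
    rw [← hx.potential_vertex f 0]
    exact hx.potential_vertex_le_of_quadratic_le hd0 hE hle hf0 hs hy 0
end

section
/- Let d ≥ 2 and f : [0,4] → (-∞,∞] be non-increasing, finite and convex on (0,4]. Let ω = {v_0,...,v_d} ⊂ S^{d-1} be affinely independent with the origin in the interior of the simplex T = conv(ω). Then min_{x ∈ S^{d-1}} ∑_{i=0}^d f(|x - v_i|²) ≤ f(4) + d·f(2 - 2/d). If moreover f is strictly convex on (0,4] and ω is not the vertex set of a regular d-simplex inscribed in S^{d-1}, then the inequality is strict. -/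
/-!
Since the origin is interior, its barycentric coordinates `λ_j` in the simplex are positive; pick
a vertex `v_i` with `λ_i ≤ 1/(d+1)`. The unit vector `w` beyond the facet opposite `v_i` satisfies
`⟪w, v_j⟫ = t > 0` for `j ≠ i`, and `∑ λ_j v_j = 0` gives `λ_i a + (1 - λ_i) t = 0` for
`a = ⟪w, v_i⟫`, whence `-1 ≤ a ≤ -d t`. The potential at `w` is `f (2 - 2a) + d f (2 - 2t)`, and
comparing secant slopes of the convex non-increasing `f` bounds it by `f 4 + d f (2 - 2/d)`, strictly
for strictly convex `f` unless `a = -1` and `t = 1/d`. In that equality case `w = -v_i` and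
`⟪v_i, v_j⟫ = -1/d` for all `j ≠ i`, which forces `λ_i = 1/(d+1)`; if this happened at every vertex
of weight at most `1/(d+1)`, all weights would equal `1/(d+1)` and the simplex would be regular.
-/

open Finset Set RealInnerProductSpace

section Slopes

variable {s : Set ℝ} {g : ℝ → ℝ} {x y z b c : ℝ}

lemma ConvexOn.slope_le_slope (hg : ConvexOn ℝ s g) (hz : z ∈ s) (hy : y ∈ s) (hx : x ∈ s)
    (hb : b ∈ s) (hzy : z < y) (hxb : x < b) (hzx : z ≤ x) (hyb : y ≤ b) :
    (g y - g z) / (y - z) ≤ (g b - g x) / (b - x) :=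
  calc (g y - g z) / (y - z) ≤ (g b - g z) / (b - z) :=
        hg.secant_mono hz hy hb hzy.ne' (by linarith) hyb
    _ = (g z - g b) / (z - b) := by rw [← neg_div_neg_eq, neg_sub, neg_sub]
    _ ≤ (g x - g b) / (x - b) := hg.secant_mono hb hz hx (by linarith) hxb.ne hzx
    _ = (g b - g x) / (b - x) := by rw [← neg_div_neg_eq, neg_sub, neg_sub]

lemma ConvexOn.add_mul_le_add_mul_of_antitoneOn (hg : ConvexOn ℝ s g) (hanti : AntitoneOn g s)
    (hx : x ∈ s) (hy : y ∈ s) (hz : z ∈ s) (hb : b ∈ s) (hzx : z ≤ x) (hxb : x ≤ b)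
    (hzy : z ≤ y) (hyb : y ≤ b) (hc : 0 ≤ c) (hgap : b - x ≤ c * (y - z)) :
    g x + c * g y ≤ g b + c * g z := by
  have hyz := hanti hz hy hzy
  rcases hxb.eq_or_lt with rfl | hxb
  · nlinarith
  have hzy : z < y := by nlinarith
  have hslope := hg.slope_le_slope hz hy hx hb hzy hxb hzx hyb
  rw [div_le_div_iff₀ (sub_pos.2 hzy) (sub_pos.2 hxb)] at hslope
  nlinarith

lemma StrictConvexOn.slope_lt_slope (hg : StrictConvexOn ℝ s g) (hz : z ∈ s) (hy : y ∈ s)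
    (hx : x ∈ s) (hb : b ∈ s) (hzy : z < y) (hxb : x < b) (hzx : z ≤ x) (hyb : y < b) :
    (g y - g z) / (y - z) < (g b - g x) / (b - x) :=
  calc (g y - g z) / (y - z) < (g b - g z) / (b - z) :=
        hg.secant_strict_mono hz hy hb hzy.ne' (by linarith) hyb
    _ ≤ (g b - g x) / (b - x) := hg.convexOn.slope_le_slope hz hb hx hb (by linarith) hxb hzx le_rfl

lemma StrictConvexOn.add_mul_lt_add_mul_of_antitoneOn (hg : StrictConvexOn ℝ s g)
    (hanti : AntitoneOn g s) (hx : x ∈ s) (hy : y ∈ s) (hz : z ∈ s) (hb : b ∈ s) (hzx : z ≤ x)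
    (hxb : x ≤ b) (hyb : y < b) (hc : 0 < c) (hgap : b - x ≤ c * (y - z)) (hne : x < b ∨ z < y) :
    g x + c * g y < g b + c * g z := by
  have hzy : z < y := hne.elim (fun h => by nlinarith) id
  rcases hxb.eq_or_lt with rfl | hxb
  · have hstrict := hg.secant_strict_mono hz hy hx hzy.ne' (by linarith) hyb
    rw [div_lt_div_iff₀ (sub_pos.2 hzy) (by linarith)] at hstrict
    have hxz := hanti hz hx (by linarith)
    nlinarith
  · have hslope := hg.slope_lt_slope hz hy hx hb hzy hxb hzx hyb
    rw [div_lt_div_iff₀ (sub_pos.2 hzy) (sub_pos.2 hxb)] at hslope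
    have hyz := hanti hz hy hzy.le
    nlinarith

end Slopes

lemma two_sub_two_mul_mem_Ioc {s : ℝ} (h₁ : -1 ≤ s) (h₂ : s < 1) : 2 - 2 * s ∈ Ioc (0 : ℝ) 4 :=
  ⟨by linarith, by linarith⟩

lemma ConvexOn.add_mul_two_sub_le {g : ℝ → ℝ} (hg : ConvexOn ℝ (Ioc 0 4) g)
    (hanti : AntitoneOn g (Ioc 0 4)) {d a t : ℝ} (hd : 1 < d) (ht : 0 < t) (ha : -1 ≤ a)
    (hat : a ≤ -(d * t)) :
    g (2 - 2 * a) + d * g (2 - 2 * t) ≤ g 4 + d * g (2 - 2 / d) ∧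
      (StrictConvexOn ℝ (Ioc 0 4) g → (-1 < a ∨ t < 1 / d) →
        g (2 - 2 * a) + d * g (2 - 2 * t) < g 4 + d * g (2 - 2 / d)) := by
  have hd0 : 0 < d := by linarith
  have hinv : d * (1 / d) = 1 := mul_one_div_cancel hd0.ne'
  have htd : t ≤ 1 / d := by rw [le_div_iff₀ hd0]; nlinarith
  have hinv1 : 1 / d < 1 := by rw [div_lt_one hd0]; exact hd
  have hinv0 : 0 < 1 / d := by positivity
  rw [show 2 - 2 / d = 2 - 2 * (1 / d) by ring]
  have hX := two_sub_two_mul_mem_Ioc ha (by nlinarith)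
  have hY := two_sub_two_mul_mem_Ioc (by linarith) (htd.trans_lt hinv1)
  have hZ := two_sub_two_mul_mem_Ioc (by linarith) hinv1
  have h4 : (4 : ℝ) ∈ Ioc (0 : ℝ) 4 := ⟨by norm_num, le_rfl⟩
  have hgap : 4 - (2 - 2 * a) ≤ d * ((2 - 2 * t) - (2 - 2 * (1 / d))) := by nlinarith
  refine ⟨hg.add_mul_le_add_mul_of_antitoneOn hanti hX hY hZ h4 (by nlinarith) hX.2 (by linarith)
    hY.2 hd0.le hgap, fun hsc hne => ?_⟩
  exact hsc.add_mul_lt_add_mul_of_antitoneOn hanti hX hY hZ h4 (by nlinarith) hX.2 (by linarith)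
    hd0 hgap (hne.imp (fun h => by linarith) (fun h => by linarith))

lemma EReal.coe_finset_sum {ι : Type*} (s : Finset ι) (h : ι → ℝ) :
    ((∑ i ∈ s, h i : ℝ) : EReal) = ∑ i ∈ s, (h i : EReal) :=
  map_sum (⟨⟨Real.toEReal, EReal.coe_zero⟩, EReal.coe_add⟩ : ℝ →+ EReal) h s

namespace AffineBasis

variable {E : Type*} [NormedAddCommGroup E] [InnerProductSpace ℝ E]

lemma coord_mul_inner_add_eq_zero {ι : Type*} [Fintype ι] (b : AffineBasis ι ℝ E) (w : E)
    {i : ι} {t : ℝ} (h : ∀ j, j ≠ i → ⟪w, b j⟫ = t) :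
    b.coord i 0 * ⟪w, b i⟫ + (1 - b.coord i 0) * t = 0 := by
  classical
  have h0 : ∑ j, b.coord j 0 * ⟪w, b j⟫ = 0 := by
    simp_rw [← real_inner_smul_right, ← inner_sum, b.linear_combination_coord_eq_self,
      inner_zero_right]
  rw [← add_sum_erase _ _ (mem_univ i), sum_congr rfl fun j hj => by
    rw [h j (ne_of_mem_erase hj)], ← sum_mul, sum_erase_eq_sub (mem_univ i),
    b.sum_coord_apply_eq_one] at h0
  exact h0

lemma exists_norm_eq_one_inner_eq {ι : Type*} [FiniteDimensional ℝ E] (b : AffineBasis ι ℝ E)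
    {i j : ι} (hji : j ≠ i) (hi : 0 < b.coord i 0) :
    ∃ w : E, ‖w‖ = 1 ∧ ∃ t : ℝ, 0 < t ∧ ∀ k, k ≠ i → ⟪w, b k⟫ = t := by
  set u : E := (InnerProductSpace.toDual ℝ E).symm (b.coord i).linear.toContinuousLinearMap
  have hu : ∀ k, k ≠ i → ⟪u, b k⟫ = -b.coord i 0 := fun k hk => by
    have := (b.coord i).linearMap_vsub (b k) 0
    simp_all [u, b.coord_apply_ne hk.symm]
  have hu0 : 0 < ‖u‖ := norm_pos_iff.2 fun h => by
    have := hu j hji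
    simp [h] at this
    linarith
  refine ⟨-‖u‖⁻¹ • u, by simp [norm_smul, hu0.ne'], b.coord i 0 / ‖u‖, by positivity,
    fun k hk => ?_⟩
  rw [real_inner_smul_left, hu k hk]
  field_simp

variable {d : ℕ} (b : AffineBasis (Fin (d + 1)) ℝ E)

lemma exists_add_one_mul_coord_le_one (q : E) : ∃ i, ((d : ℝ) + 1) * b.coord i q ≤ 1 := by
  obtain ⟨i, -, hi⟩ := exists_le_of_sum_le (f := fun i => ((d : ℝ) + 1) * b.coord i q)
    (g := fun _ => 1) univ_nonempty (by simp [← mul_sum, b.sum_coord_apply_eq_one])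
  exact ⟨i, hi⟩

lemma exists_norm_eq_one_inner_le_neg_mul [FiniteDimensional ℝ E] (hd : 0 < d) {i : Fin (d + 1)}
    (hi0 : 0 < b.coord i 0) (hi : ((d : ℝ) + 1) * b.coord i 0 ≤ 1) :
    ∃ w : E, ‖w‖ = 1 ∧ ∃ t : ℝ, 0 < t ∧ (∀ k, k ≠ i → ⟪w, b k⟫ = t) ∧ ⟪w, b i⟫ ≤ -(d * t) := by
  obtain ⟨j, hji⟩ : ∃ j, j ≠ i :=
    have := Fin.nontrivial_iff_two_le.2 (by omega : 2 ≤ d + 1); exists_ne i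
  obtain ⟨w, hw, t, ht, hwt⟩ := b.exists_norm_eq_one_inner_eq hji hi0
  have hbal := b.coord_mul_inner_add_eq_zero w hwt
  refine ⟨w, hw, t, ht, hwt, ?_⟩
  by_contra! h
  nlinarith [mul_pos hi0 (by linarith : 0 < ⟪w, b i⟫ + d * t), mul_nonneg (sub_nonneg.2 hi) ht.le]

lemma add_one_mul_coord_eq_one (hd : 0 < d) {i : Fin (d + 1)} (hbi : ‖b i‖ = 1)
    (h : ∀ j, j ≠ i → ⟪b i, b j⟫ = -1 / d) : ((d : ℝ) + 1) * b.coord i 0 = 1 := by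
  have hbal := b.coord_mul_inner_add_eq_zero (b i) h
  rw [real_inner_self_eq_norm_sq, hbi] at hbal
  have hd' : (d : ℝ) ≠ 0 := by positivity
  field_simp at hbal
  linarith

lemma exists_add_one_mul_coord_le_one_and_inner_ne (hd : 0 < d) (hb : ∀ j, ‖b j‖ = 1)
    (hreg : ¬ ∀ i j, i ≠ j → ⟪b i, b j⟫ = -1 / d) :
    ∃ i, ((d : ℝ) + 1) * b.coord i 0 ≤ 1 ∧ ∃ j, j ≠ i ∧ ⟪b i, b j⟫ ≠ -1 / d := by
  by_contra! h
  have hge : ∀ i ∈ Finset.univ, (1 : ℝ) ≤ ((d : ℝ) + 1) * b.coord i 0 := fun i _ => by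
    by_contra! hlt
    linarith [b.add_one_mul_coord_eq_one hd (hb i) (h i hlt.le)]
  have heq := (sum_eq_sum_iff_of_le hge).1 (by simp [← mul_sum, b.sum_coord_apply_eq_one])
  exact hreg fun i j hij => h i (heq i (mem_univ i)).ge j hij.symm

end AffineBasis

noncomputable def spherePotential {ι E : Type*} [Fintype ι] [NormedAddCommGroup E]
    (f : ℝ → EReal) (v : ι → E) : EReal :=
  ⨅ y : Metric.sphere (0 : E) 1, ∑ i, f (‖(y : E) - v i‖ ^ 2)

lemma spherePotential_le {ι E : Type*} [Fintype ι] [NormedAddCommGroup E] (f : ℝ → EReal)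
    (v : ι → E) {y : E} (hy : ‖y‖ = 1) : spherePotential f v ≤ ∑ i, f (‖y - v i‖ ^ 2) :=
  iInf_le_of_le ⟨y, by simpa using hy⟩ le_rfl

lemma spherePotential_le_of_coord_le {E : Type*} [NormedAddCommGroup E] [InnerProductSpace ℝ E]
    [FiniteDimensional ℝ E] {f : ℝ → EReal} {g : ℝ → ℝ}
    (hfg : ∀ s ∈ Ioc (0 : ℝ) 4, f s = g s) (hconv : ConvexOn ℝ (Ioc 0 4) g)
    (hanti : AntitoneOn g (Ioc 0 4)) {d : ℕ} (hd : 2 ≤ d) (b : AffineBasis (Fin (d + 1)) ℝ E)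
    (hb : ∀ j, ‖b j‖ = 1) {i : Fin (d + 1)} (hi0 : 0 < b.coord i 0)
    (hi : ((d : ℝ) + 1) * b.coord i 0 ≤ 1) :
    spherePotential f b ≤ f 4 + ((d : ℝ) : EReal) * f (2 - 2 / d) ∧
      (StrictConvexOn ℝ (Ioc 0 4) g → (∃ j, j ≠ i ∧ ⟪b i, b j⟫ ≠ -1 / d) →
        spherePotential f b < f 4 + ((d : ℝ) : EReal) * f (2 - 2 / d)) := by
  have hd1 : (1 : ℝ) < d := by exact_mod_cast hd
  obtain ⟨w, hw, t, ht, hwt, hat⟩ := b.exists_norm_eq_one_inner_le_neg_mul (by omega) hi0 hi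
  set a := ⟪w, b i⟫
  have ha : -1 ≤ a := neg_one_le_real_inner_of_norm_eq_one hw (hb i)
  have htd : t ≤ 1 / d := by rw [le_div_iff₀ (by linarith)]; linarith
  have hX := two_sub_two_mul_mem_Ioc ha (by nlinarith)
  have hY := two_sub_two_mul_mem_Ioc (by linarith) (htd.trans_lt ((div_lt_one (by linarith)).2 hd1))
  have hpot : ∑ k, f (‖w - b k‖ ^ 2) = ((g (2 - 2 * a) + d * g (2 - 2 * t) : ℝ) : EReal) := by
    have hterm : ∀ k, f (‖w - b k‖ ^ 2) =
        ((if k = i then g (2 - 2 * a) else g (2 - 2 * t) : ℝ) : EReal) := fun k => by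
      rw [show ‖w - b k‖ ^ 2 = 2 - 2 * ⟪w, b k⟫ by rw [norm_sub_sq_real, hw, hb k]; ring]
      split_ifs with hk
      · rw [hk]; exact hfg _ hX
      · rw [hwt k hk]; exact hfg _ hY
    rw [sum_congr rfl fun k _ => hterm k, ← EReal.coe_finset_sum]
    simp [sum_ite, filter_eq', filter_ne']
  have hZ : 2 - 2 / (d : ℝ) ∈ Set.Ioc 0 4 := by
    have : 2 / (d : ℝ) < 2 := by rw [div_lt_iff₀ (by linarith)]; linarith
    exact ⟨by linarith, by linarith [div_pos two_pos (by linarith : (0 : ℝ) < d)]⟩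
  have hbound :
      f 4 + ((d : ℝ) : EReal) * f (2 - 2 / d) = ((g 4 + d * g (2 - 2 / d) : ℝ) : EReal) := by
    rw [hfg 4 ⟨by norm_num, le_rfl⟩, hfg _ hZ]; norm_cast
  have hP := spherePotential_le f b hw
  rw [hpot] at hP
  rw [hbound]
  obtain ⟨hle, hlt⟩ := hconv.add_mul_two_sub_le hanti hd1 ht ha hat
  refine ⟨hP.trans (by exact_mod_cast hle), fun hsc ⟨j, hji, hij⟩ => hP.trans_lt ?_⟩
  have hne : -1 < a ∨ t < 1 / d := by
    by_contra! h
    have hwi : w = -b i := (inner_eq_neg_one_iff_of_norm_eq_one hw (hb i)).1 (le_antisymm h.1 ha)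
    apply hij
    rw [← neg_neg (b i), ← hwi, inner_neg_left, hwt j hji, le_antisymm htd h.2]
    ring
  exact_mod_cast hlt hsc hne

theorem stmt_15 (d : ℕ) (hd : 2 ≤ d) (f : ℝ → EReal)
    (hne_bot : ∀ t ∈ Set.Icc (0:ℝ) 4, f t ≠ ⊥)
    (hfin : ∀ t ∈ Set.Ioc (0:ℝ) 4, f t ≠ ⊤)
    (hanti : AntitoneOn f (Set.Ioc (0:ℝ) 4))
    (hconv : ConvexOn ℝ (Set.Ioc (0:ℝ) 4) (fun t => (f t).toReal))
    (v : Fin (d+1) → EuclideanSpace ℝ (Fin d))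
    (hvnorm : ∀ i, ‖v i‖ = 1)
    (hai : AffineIndependent ℝ v)
    (hint : (0 : EuclideanSpace ℝ (Fin d)) ∈ interior (convexHull ℝ (Set.range v))) :
    (⨅ y : Metric.sphere (0 : EuclideanSpace ℝ (Fin d)) 1,
        ∑ i, f (‖(y : EuclideanSpace ℝ (Fin d)) - v i‖^2)) ≤
      f 4 + ((d:ℝ) : EReal) * f (2 - 2/(d:ℝ)) ∧
    (StrictConvexOn ℝ (Set.Ioc (0:ℝ) 4) (fun t => (f t).toReal) →
      ¬ (∀ i j, i ≠ j → (inner ℝ (v i) (v j) : ℝ) = -1/(d:ℝ)) →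
      (⨅ y : Metric.sphere (0 : EuclideanSpace ℝ (Fin d)) 1,
          ∑ i, f (‖(y : EuclideanSpace ℝ (Fin d)) - v i‖^2)) <
        f 4 + ((d:ℝ) : EReal) * f (2 - 2/(d:ℝ))) := by
  let b : AffineBasis (Fin (d + 1)) ℝ (EuclideanSpace ℝ (Fin d)) :=
    ⟨v, hai, hai.affineSpan_eq_top_iff_card_eq_finrank_add_one.2 (by simp)⟩
  have hpos : ∀ j, 0 < b.coord j 0 := by
    have h : (0 : EuclideanSpace ℝ (Fin d)) ∈ interior (convexHull ℝ (Set.range b)) := hint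
    rwa [b.interior_convexHull] at h
  have hfg : ∀ s ∈ Ioc (0 : ℝ) 4, f s = ((f s).toReal : EReal) := fun s hs =>
    (EReal.coe_toReal (hfin s hs) (hne_bot s (Ioc_subset_Icc_self hs))).symm
  have hanti' : AntitoneOn (fun s => (f s).toReal) (Ioc 0 4) := fun s hs r hr hsr =>
    EReal.toReal_le_toReal (hanti hs hr hsr) (hne_bot r (Ioc_subset_Icc_self hr)) (hfin s hs)
  have key i := spherePotential_le_of_coord_le hfg hconv hanti' hd b hvnorm (hpos i)
  obtain ⟨i, hi⟩ := b.exists_add_one_mul_coord_le_one 0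
  refine ⟨(key i hi).1, fun hsc hreg => ?_⟩
  obtain ⟨i, hi, hne⟩ := b.exists_add_one_mul_coord_le_one_and_inner_ne (by omega) hvnorm hreg
  exact (key i hi).2 hsc hne
end
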